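/- arXiv:2401.12613 — 5 statements merged into one kernel-verified Lean document; each statement's English description precedes it below -/
import Mathlib

section
/- Let G be a finite simple graph on vertex set {1,...,n} with adjacency matrix A_G and stability number α(G) ≥ 1. Then the minimum of x^T (A_G + I) x over the standard simplex Δ_n = {x ∈ ℝ^n : x ≥ 0, Σ x_i = 1} equals 1/α(G). -/
/-
Along an edge `ij` the form `q x = xᵀ(A_G + I)x` is affine in the direction `e_i - e_j`, since
`(e_i - e_j)ᵀ(A_G + I)(e_i - e_j) = 1 + 1 - 2 = 0`. So moving all the mass of one endpoint onto the
other, in the direction in which `q` does not increase, stays in the simplex and shrinks the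
support. Iterating, every point of the simplex is dominated by one whose support is stable; there
`q x = ∑ x_i²`, which is at least `1 / |supp x| ≥ 1 / α(G)` by Cauchy–Schwarz. The uniform
distribution on a maximum stable set attains `1 / α(G)`.
-/

open Finset Matrix

/-- The stability number: the maximum cardinality of a stable (independent) set. -/
noncomputable def alpha {V : Type*} [Fintype V] (G : SimpleGraph V) : ℕ :=
  sSup {k | ∃ S : Finset V, (∀ i ∈ S, ∀ j ∈ S, ¬ G.Adj i j) ∧ S.card = k}

open Function SimpleGraph

theorem alpha_eq_indepNum {V : Type*} [Fintype V] (G : SimpleGraph V) :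
    alpha G = G.indepNum := by
  have hstable : ∀ S : Finset V, (∀ i ∈ S, ∀ j ∈ S, ¬ G.Adj i j) ↔ G.IsIndepSet S :=
    fun S => ⟨fun h i hi j hj _ => h i hi j hj,
      fun h i hi j hj hij => h hi hj (G.ne_of_adj hij) hij⟩
  simp only [alpha, indepNum, isNIndepSet_iff, hstable]

section QuadraticForm

variable {ι R : Type*} [Fintype ι] [CommRing R] (M : Matrix ι ι R)

theorem dotProduct_mulVec_add_smul {v : ι → R} (hv : v ⬝ᵥ M *ᵥ v = 0) (x : ι → R) (t : R) :
    (x + t • v) ⬝ᵥ M *ᵥ (x + t • v) = x ⬝ᵥ M *ᵥ x + t * (x ⬝ᵥ M *ᵥ v + v ⬝ᵥ M *ᵥ x) := by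
  simp only [mulVec_add, mulVec_smul, dotProduct_add, add_dotProduct,
    dotProduct_smul, smul_dotProduct, hv, smul_eq_mul]
  ring

theorem single_sub_single_dotProduct_mulVec [DecidableEq ι] (i j : ι) :
    (Pi.single i 1 - Pi.single j 1) ⬝ᵥ M *ᵥ (Pi.single i 1 - Pi.single j 1)
      = M i i - M i j - M j i + M j j := by
  simp only [mulVec_sub, mulVec_single, MulOpposite.op_one, one_smul, dotProduct_sub,
    sub_dotProduct, single_dotProduct, col_apply, one_mul]
  ring

end QuadraticForm

section Simplex

variable {ι R : Type*} [DecidableEq ι] {x : ι → R} {i j : ι}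

theorem support_add_smul_single_sub_single_ssubset [Ring R] (hij : i ≠ j) (hi : x i ≠ 0)
    (hj : x j ≠ 0) : support (x + x j • (Pi.single i 1 - Pi.single j 1)) ⊂ support x := by
  refine Set.ssubset_iff_subset_ne.2 ⟨fun k hk => ?_, fun h => ?_⟩
  · rcases eq_or_ne k i with rfl | hki
    · exact hi
    rcases eq_or_ne k j with rfl | hkj
    · exact hj
    · simpa [hki, hkj] using hk
  · have : j ∉ support (x + x j • (Pi.single i 1 - Pi.single j 1)) := by simp [hij.symm]
    exact this (h ▸ hj)

variable [Fintype ι]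

theorem add_smul_single_sub_single_mem_stdSimplex [Ring R] [PartialOrder R] [IsOrderedRing R]
    (hx : x ∈ stdSimplex R ι) (hij : i ≠ j) :
    x + x j • (Pi.single i 1 - Pi.single j 1) ∈ stdSimplex R ι := by
  refine ⟨fun k => ?_, ?_⟩
  · rcases eq_or_ne k i with rfl | hki
    · simpa [hij] using add_nonneg (hx.1 k) (hx.1 j)
    rcases eq_or_ne k j with rfl | hkj
    · simp [hki]
    · simpa [hki, hkj] using hx.1 k
  · simp [Finset.sum_add_distrib, ← Finset.mul_sum, hx.2]

variable [CommRing R] [LinearOrder R] [IsOrderedRing R] (M : Matrix ι ι R)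

theorem exists_support_ssubset_dotProduct_mulVec_le (hM : M i i + M j j = M i j + M j i)
    (hx : x ∈ stdSimplex R ι) (hij : i ≠ j) (hi : x i ≠ 0) (hj : x j ≠ 0) :
    ∃ y ∈ stdSimplex R ι, support y ⊂ support x ∧ y ⬝ᵥ M *ᵥ y ≤ x ⬝ᵥ M *ᵥ x := by
  set v : ι → R := Pi.single i 1 - Pi.single j 1
  have hv : v ⬝ᵥ M *ᵥ v = 0 := by
    rw [single_sub_single_dotProduct_mulVec]; linear_combination hM
  have hv' : (-v) ⬝ᵥ M *ᵥ (-v) = 0 := by simpa [mulVec_neg] using hv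
  have hneg : Pi.single j 1 - Pi.single i 1 = -v := (neg_sub _ _).symm
  rcases le_total (x ⬝ᵥ M *ᵥ v + v ⬝ᵥ M *ᵥ x) 0 with hd | hd
  · refine ⟨_, add_smul_single_sub_single_mem_stdSimplex hx hij,
      support_add_smul_single_sub_single_ssubset hij hi hj, ?_⟩
    rw [dotProduct_mulVec_add_smul M hv]
    exact add_le_of_nonpos_right (mul_nonpos_of_nonneg_of_nonpos (hx.1 j) hd)
  · refine ⟨_, add_smul_single_sub_single_mem_stdSimplex hx hij.symm,
      support_add_smul_single_sub_single_ssubset hij.symm hj hi, ?_⟩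
    rw [hneg, dotProduct_mulVec_add_smul M hv']
    simp only [mulVec_neg, dotProduct_neg, neg_dotProduct, ← neg_add, mul_neg]
    exact add_le_of_nonpos_right (neg_nonpos.2 (mul_nonneg (hx.1 i) hd))

theorem exists_isIndepSet_support_dotProduct_mulVec_le (G : SimpleGraph ι)
    (hM : ∀ i j, G.Adj i j → M i i + M j j = M i j + M j i) (hx : x ∈ stdSimplex R ι) :
    ∃ y ∈ stdSimplex R ι, G.IsIndepSet (support y) ∧ y ⬝ᵥ M *ᵥ y ≤ x ⬝ᵥ M *ᵥ x := by
  induction hk : (support x).ncard using Nat.strong_induction_on generalizing x with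
  | _ k ih =>
    by_cases hind : G.IsIndepSet (support x)
    · exact ⟨x, hx, hind, le_rfl⟩
    obtain ⟨i, hi, j, hj, hij, hadj⟩ : ∃ i ∈ support x, ∃ j ∈ support x, i ≠ j ∧ G.Adj i j := by
      simpa [isIndepSet_iff, Set.Pairwise] using hind
    obtain ⟨x', hx', hsub, hle⟩ :=
      exists_support_ssubset_dotProduct_mulVec_le M (hM i j hadj) hx hij hi hj
    obtain ⟨y, hy, hyind, hyle⟩ := ih _ (hk ▸ Set.ncard_lt_ncard hsub) hx' rfl
    exact ⟨y, hy, hyind, hyle.trans hle⟩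

end Simplex

section SumOfSquares

variable {ι R : Type*} [Fintype ι] [Field R] [LinearOrder R] [IsStrictOrderedRing R]

theorem one_le_card_mul_dotProduct_self {x : ι → R} (hx : x ∈ stdSimplex R ι) {s : Finset ι}
    (hs : support x ⊆ s) : 1 ≤ #s * (x ⬝ᵥ x) := by
  have hsum : ∑ i ∈ s, x i = 1 := by
    rw [← hx.2]
    exact Finset.sum_subset (Finset.subset_univ s) fun i _ hi => notMem_support.1 (hi <| hs ·)
  have hsq : ∑ i ∈ s, x i ^ 2 = x ⬝ᵥ x := by
    rw [dotProduct, ← Finset.sum_subset (Finset.subset_univ s)]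
    · simp [sq]
    · intro i _ hi
      simp [notMem_support.1 (hi <| hs ·)]
  simpa [hsum, hsq] using sq_sum_le_card_mul_sum_sq (s := s) (f := x)

theorem exists_mem_stdSimplex_support_eq_dotProduct_self_eq {s : Finset ι} (hs : s.Nonempty) :
    ∃ x ∈ stdSimplex R ι, support x = s ∧ x ⬝ᵥ x = (#s : R)⁻¹ := by
  classical
  have hcard : (#s : R) ≠ 0 := Nat.cast_ne_zero.2 hs.card_ne_zero
  refine ⟨fun i => if i ∈ s then (#s : R)⁻¹ else 0, ⟨fun i => ?_, ?_⟩, ?_, ?_⟩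
  · dsimp only
    split_ifs <;> positivity
  · simp [Finset.sum_ite_mem, hcard]
  · ext i
    simp [hcard]
  · simp [dotProduct, Finset.sum_ite_mem, hcard]

end SumOfSquares

namespace SimpleGraph

variable {V R : Type*} (G : SimpleGraph V)

theorem dotProduct_adjMatrix_mulVec_eq_zero [Fintype V] [DecidableRel G.Adj] [NonAssocSemiring R]
    {x : V → R} (hx : G.IsIndepSet (Function.support x)) : x ⬝ᵥ G.adjMatrix R *ᵥ x = 0 := by
  rw [dotProduct_mulVec_adjMatrix]
  refine Finset.sum_eq_zero fun i _ => Finset.sum_eq_zero fun j _ => ?_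
  split_ifs with hij
  · by_contra h
    exact hx (left_ne_zero_of_mul h) (right_ne_zero_of_mul h) (G.ne_of_adj hij) hij
  · rfl

theorem dotProduct_adjMatrix_add_one_mulVec_eq [Fintype V] [DecidableEq V] [DecidableRel G.Adj]
    [NonAssocSemiring R] {x : V → R} (hx : G.IsIndepSet (Function.support x)) :
    x ⬝ᵥ (G.adjMatrix R + 1) *ᵥ x = x ⬝ᵥ x := by
  rw [add_mulVec, one_mulVec, dotProduct_add,
    G.dotProduct_adjMatrix_mulVec_eq_zero hx, zero_add]

theorem adjMatrix_add_one_diag_add_diag [DecidableEq V] [DecidableRel G.Adj] [NonAssocSemiring R]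
    {i j : V} (h : G.Adj i j) :
    (G.adjMatrix R + 1) i i + (G.adjMatrix R + 1) j j
      = (G.adjMatrix R + 1) i j + (G.adjMatrix R + 1) j i := by
  simp [h, h.symm, G.ne_of_adj h, (G.ne_of_adj h).symm]

theorem one_le_indepNum_mul_dotProduct_self [Fintype V] [Field R] [LinearOrder R]
    [IsStrictOrderedRing R] {x : V → R} (hx : x ∈ stdSimplex R V)
    (hind : G.IsIndepSet (Function.support x)) : 1 ≤ G.indepNum * (x ⬝ᵥ x) := by
  have hfin := Set.toFinite (Function.support x)
  calc 1 ≤ #hfin.toFinset * (x ⬝ᵥ x) := one_le_card_mul_dotProduct_self hx (by simp)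
    _ ≤ G.indepNum * (x ⬝ᵥ x) := by
      gcongr
      · exact Finset.sum_nonneg fun i _ => mul_self_nonneg (x i)
      · exact IsIndepSet.card_le_indepNum (by simpa using hind)

end SimpleGraph

/-- Motzkin–Straus: the minimum of `xᵀ(A_G + I)x` over the standard simplex is `1/α(G)`. -/
theorem motzkin_straus {n : ℕ} (G : SimpleGraph (Fin n)) [DecidableRel G.Adj]
    (hα : 1 ≤ alpha G) :
    IsLeast {v : ℝ | ∃ x ∈ stdSimplex ℝ (Fin n),
        v = x ⬝ᵥ ((G.adjMatrix ℝ + 1) *ᵥ x)} (1 / (alpha G : ℝ)) := by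
  rw [alpha_eq_indepNum] at hα ⊢
  obtain ⟨S, hS, hcard⟩ := G.exists_isNIndepSet_indepNum
  refine ⟨?_, ?_⟩
  · obtain ⟨x, hx, hsupp, hxx⟩ := exists_mem_stdSimplex_support_eq_dotProduct_self_eq (R := ℝ)
      (Finset.card_pos.1 (hcard ▸ hα))
    refine ⟨x, hx, ?_⟩
    rw [G.dotProduct_adjMatrix_add_one_mulVec_eq (hsupp ▸ hS), hxx, hcard, one_div]
  · rintro _ ⟨x, hx, rfl⟩
    obtain ⟨y, hy, hyS, hle⟩ := exists_isIndepSet_support_dotProduct_mulVec_le _ G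
      (fun i j => G.adjMatrix_add_one_diag_add_diag) hx
    calc 1 / (G.indepNum : ℝ) ≤ y ⬝ᵥ y :=
          (div_le_iff₀' (by exact_mod_cast hα)).2 (G.one_le_indepNum_mul_dotProduct_self hy hyS)
      _ = y ⬝ᵥ (G.adjMatrix ℝ + 1) *ᵥ y := (G.dotProduct_adjMatrix_add_one_mulVec_eq hyS).symm
      _ ≤ _ := hle
end

section
/- Let G be a graph on {1,...,n}, B ∈ B(G), and x ∈ Δ_n with support S = supp(x). Suppose every edge {i,j} of the induced subgraph G[S] satisfies B_{ij} = 1, every connected component C_1,...,C_k of G[S] is a clique of G, and Σ_{i ∈ C_h} x_i = 1/α(G) for each h ∈ [k]. Then x^T B x = 1/α(G), i.e., x is a minimizer of min_{y ∈ Δ_n} y^T B y. -/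
open Finset Matrix

open Classical in
/-- If the support of `x ∈ Δ_n` induces a subgraph whose edges all have `B`-entry `1`, whose
connected components are cliques of `G`, and where `x` sums to `1/α(G)` over each component,
then `x` is a minimizer: `xᵀBx = 1/α(G)`. -/
theorem minimizer_of_structure {n : ℕ} (G : SimpleGraph (Fin n))
    (B : Matrix (Fin n) (Fin n) ℝ) (hsymm : B.IsSymm)
    (hdiag : ∀ i, B i i = 1)
    (hedge : ∀ i j, G.Adj i j → 1 ≤ B i j)
    (hnonedge : ∀ i j, i ≠ j → ¬ G.Adj i j → B i j = 0)
    (x : Fin n → ℝ) (hx : x ∈ stdSimplex ℝ (Fin n))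
    (hB1 : ∀ i j, 0 < x i → 0 < x j → G.Adj i j → B i j = 1)
    (hclique : ∀ c : (G.induce {i | 0 < x i}).ConnectedComponent,
      G.IsClique (Subtype.val ''
        {v : {i : Fin n // 0 < x i} | (G.induce {i | 0 < x i}).connectedComponentMk v = c}))
    (hsum : ∀ c : (G.induce {i | 0 < x i}).ConnectedComponent,
      ∑ v : {i : Fin n // 0 < x i},
        (if (G.induce {i | 0 < x i}).connectedComponentMk v = c then x v.val else 0) =
        1 / (alpha G : ℝ)) :
    x ⬝ᵥ (B *ᵥ x) = 1 / (alpha G : ℝ) := by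
  classical
  set S : Set (Fin n) := {i | 0 < x i} with hS
  set mk : {i : Fin n // 0 < x i} → (G.induce S).ConnectedComponent :=
    (G.induce S).connectedComponentMk with hmk
  have hx0 : ∀ i, 0 ≤ x i := hx.1
  have hx1 : ∑ i, x i = 1 := hx.2
  -- restriction lemma
  have hrestrict : ∀ g : Fin n → ℝ, (∀ i, x i = 0 → g i = 0) →
      ∑ i, g i = ∑ i : {i : Fin n // 0 < x i}, g i.val := by
    intro g hg
    rw [← Finset.sum_subtype (Finset.univ.filter fun i => 0 < x i)
        (by simp) g]
    exact (Finset.sum_filter_of_ne (fun i _ hne =>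
      (hx0 i).lt_of_ne (fun h => hne (hg i h.symm)))).symm
  -- pointwise
  have hpoint : ∀ i j : {i : Fin n // 0 < x i},
      x i.val * (B i.val j.val * x j.val) =
        if mk i = mk j then x i.val * x j.val else 0 := by
    intro i j
    by_cases hij : i.val = j.val
    · have : i = j := Subtype.ext hij
      subst this
      simp [hdiag]
    · by_cases hadj : G.Adj i.val j.val
      · have hcomp : mk i = mk j := by
          apply SimpleGraph.ConnectedComponent.sound
          exact SimpleGraph.Adj.reachable (by simpa using hadj)
        rw [hB1 _ _ i.2 j.2 hadj, hcomp, if_pos rfl, one_mul]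
      · rw [hnonedge _ _ hij hadj, zero_mul, mul_zero]
        rw [if_neg]
        intro hcomp
        exact hadj (hclique (mk j) ⟨i, hcomp, rfl⟩ ⟨j, rfl, rfl⟩ hij)
  -- compute
  have step1 : x ⬝ᵥ (B *ᵥ x) = ∑ i, ∑ j, x i * (B i j * x j) := by
    simp [dotProduct, Matrix.mulVec, Finset.mul_sum]
  rw [step1]
  rw [hrestrict (fun i => ∑ j, x i * (B i j * x j))
      (fun i hi => by simp [hi])]
  have step2 : ∀ i : {i : Fin n // 0 < x i},
      ∑ j, x i.val * (B i.val j * x j) =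
        ∑ j : {i : Fin n // 0 < x i}, x i.val * (B i.val j.val * x j.val) := by
    intro i
    exact hrestrict _ (fun j hj => by simp [hj])
  simp_rw [step2, hpoint]
  have step3 : ∀ i : {i : Fin n // 0 < x i},
      ∑ j : {i : Fin n // 0 < x i}, (if mk i = mk j then x i.val * x j.val else 0)
        = x i.val * (1 / (alpha G : ℝ)) := by
    intro i
    rw [← hsum (mk i), Finset.mul_sum]
    congr 1
    ext j
    simp only [mul_ite, mul_zero, eq_comm]
  simp_rw [step3, ← Finset.sum_mul]
  rw [← hrestrict x (fun _ h => h), hx1, one_mul]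
end

section
/- Let G be a graph on {1,...,n} with twin pair (1,2), and let G \ 1 be the graph obtained by deleting vertex 1. Then the quadratic forms f_G(x) = x^T(A_G+I)x and f_{G\1}(y) = y^T(A_{G\1}+I)y (in variables x_2,...,x_n) satisfy the identity f_G(x_1, x_2, x_3, ..., x_n) = f_{G\1}(x_1 + x_2, x_3, ..., x_n). -/
/-!
Because `a` and `b` are adjacent twins, rows `a` and `b` of `A_G + I` coincide, and so (by
symmetry) do the columns. Hence `A_G + I` is the matrix of `G \ a` plus `I`, pulled back along the
map that sends `a` to `b` and fixes every other vertex. A quadratic form pulled back along a map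
of index sets is the original form evaluated at the fibrewise sums of the variables, and the
fibre of `b` is `{a, b}`.
-/

open Finset Matrix

theorem sum_fiberwise_dotProduct {ι κ R : Type*} [Fintype ι] [Fintype κ] [DecidableEq κ]
    [CommSemiring R] (π : ι → κ) (x : ι → R) (v : κ → R) :
    (fun k => ∑ i with π i = k, x i) ⬝ᵥ v = x ⬝ᵥ (v ∘ π) := by
  simp only [dotProduct, sum_mul, Function.comp_apply]
  rw [← Finset.sum_fiberwise univ π fun i => x i * v (π i)]
  exact sum_congr rfl fun k _ => sum_congr rfl fun i hi => by rw [(mem_filter.1 hi).2]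

theorem dotProduct_mulVec_submatrix_self {ι κ R : Type*} [Fintype ι] [Fintype κ] [DecidableEq κ]
    [CommSemiring R] (N : Matrix κ κ R) (π : ι → κ) (x : ι → R) :
    x ⬝ᵥ (N.submatrix π π *ᵥ x) =
      (fun k => ∑ i with π i = k, x i) ⬝ᵥ (N *ᵥ fun k => ∑ i with π i = k, x i) := by
  rw [sum_fiberwise_dotProduct]
  congr 1
  ext i
  simp only [Function.comp_apply, mulVec, dotProduct_comm (N (π i)), sum_fiberwise_dotProduct]
  exact dotProduct_comm _ _

theorem Matrix.IsSymm.apply_ite_eq_of_row_eq {ι α : Type*} [DecidableEq ι] {M : Matrix ι ι α}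
    (hM : M.IsSymm) {a b : ι} (hrow : M a = M b) (i j : ι) :
    M (if i = a then b else i) (if j = a then b else j) = M i j := by
  have hcol : ∀ k, M k a = M k b := fun k => by rw [hM.apply a k, hM.apply b k, hrow]
  split_ifs with hi hj hj <;> subst_vars <;> simp [hrow, hcol]

theorem SimpleGraph.adjMatrix_add_one_row_eq_of_twin {V R : Type*} [DecidableEq V] [Semiring R]
    {G : SimpleGraph V} [DecidableRel G.Adj] {a b : V} (hadj : G.Adj a b)
    (htwin : G.neighborSet a \ {b} = G.neighborSet b \ {a}) :
    (G.adjMatrix R + 1) a = (G.adjMatrix R + 1) b := by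
  ext j
  have hab := hadj.ne
  by_cases hja : j = a
  · subst hja; simp [one_apply, hadj.symm, hab.symm]
  by_cases hjb : j = b
  · subst hjb; simp [one_apply, hadj, hab]
  have hiff : G.Adj a j ↔ G.Adj b j := by
    simpa [hja, hjb] using Set.ext_iff.mp htwin j
  simp [one_apply, hiff, Ne.symm hja, Ne.symm hjb]

theorem SimpleGraph.adjMatrix_induce {V R : Type*} [Zero R] [One R] (G : SimpleGraph V)
    [DecidableRel G.Adj] (s : Set V) [DecidableRel (G.induce s).Adj] :
    (G.induce s).adjMatrix R = (G.adjMatrix R).submatrix (↑) (↑) := by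
  ext v w
  simp [adjMatrix_apply]

def mergeInto {ι : Type*} [DecidableEq ι] {a : ι} (b : ι) (hab : a ≠ b) (v : ι) :
    {v : ι // v ≠ a} :=
  if h : v = a then ⟨b, hab.symm⟩ else ⟨v, h⟩

theorem coe_mergeInto {ι : Type*} [DecidableEq ι] {a b : ι} (hab : a ≠ b) (v : ι) :
    (mergeInto b hab v : ι) = if v = a then b else v := by
  unfold mergeInto; split_ifs <;> rfl

theorem sum_fiber_mergeInto {ι R : Type*} [Fintype ι] [DecidableEq ι] [AddCommMonoid R]
    {a b : ι} (hab : a ≠ b) (x : ι → R) (k : {v : ι // v ≠ a}) :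
    ∑ i with mergeInto b hab i = k, x i = if (k : ι) = b then x a + x b else x k := by
  obtain ⟨k, hk⟩ := k
  split_ifs with hkb
  · subst hkb
    have : ({i | mergeInto k hab i = ⟨k, hk⟩} : Finset ι) = {a, k} := by
      ext i
      simp only [mem_filter, mem_univ, true_and, mem_insert, mem_singleton, Subtype.ext_iff,
        coe_mergeInto]
      grind
    simp [this, hab]
  · have : ({i | mergeInto b hab i = ⟨k, hk⟩} : Finset ι) = {k} := by
      ext i
      simp only [mem_filter, mem_univ, true_and, mem_singleton, Subtype.ext_iff, coe_mergeInto]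
      grind
    simp [this]

theorem SimpleGraph.adjMatrix_add_one_eq_submatrix_induce_of_twin {V R : Type*} [DecidableEq V]
    [Semiring R] {G : SimpleGraph V} [DecidableRel G.Adj] {a b : V} (hadj : G.Adj a b)
    (htwin : G.neighborSet a \ {b} = G.neighborSet b \ {a})
    [DecidableRel (G.induce {v | v ≠ a}).Adj] :
    G.adjMatrix R + 1 = ((G.induce {v | v ≠ a}).adjMatrix R + 1).submatrix
      (mergeInto b hadj.ne) (mergeInto b hadj.ne) := by
  rw [adjMatrix_induce, ← submatrix_one _ Subtype.val_injective]
  ext i j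
  change _ = (G.adjMatrix R + 1) (mergeInto b hadj.ne i) (mergeInto b hadj.ne j)
  rw [coe_mergeInto, coe_mergeInto]
  exact (((G.isSymm_adjMatrix (α := R)).add isSymm_one).apply_ite_eq_of_row_eq
    (adjMatrix_add_one_row_eq_of_twin hadj htwin) i j).symm

open Classical in
/-- If `(a,b)` is a twin pair of `G`, then the Motzkin–Straus quadratic form of `G` is obtained
from that of `G \ a` by substituting `x_b ↦ x_a + x_b`:
`f_G(x) = f_{G \ a}(…, x_a + x_b, …)`. -/
theorem twin_pair_quadratic_form_identity {n : ℕ} (G : SimpleGraph (Fin n))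
    [DecidableRel G.Adj] (a b : Fin n) (hadj : G.Adj a b)
    (htwin : G.neighborSet a \ {b} = G.neighborSet b \ {a}) :
    ∀ x : Fin n → ℝ,
      x ⬝ᵥ ((G.adjMatrix ℝ + 1) *ᵥ x) =
        (fun v : {v : Fin n // v ≠ a} => if (v : Fin n) = b then x a + x b else x v) ⬝ᵥ
          (((G.induce {v | v ≠ a}).adjMatrix ℝ + 1) *ᵥ
            fun v : {v : Fin n // v ≠ a} => if (v : Fin n) = b then x a + x b else x v) := by
  intro x
  rw [SimpleGraph.adjMatrix_add_one_eq_submatrix_induce_of_twin hadj htwin,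
    dotProduct_mulVec_submatrix_self]
  simp only [sum_fiber_mergeInto]
  rfl
end

section
/- Let G be a graph on {1,...,n} with a twin pair (1,2) and let r ∈ ℕ. If the polynomial x^T(A_{G\1}+I)x − 1/α(G) (in variables x_2,...,x_n) lies in M(x_2,...,x_n)_r + I(Σ_{i=2}^n x_i − 1)_r, then x^T(A_G+I)x − 1/α(G) lies in M(x_1,...,x_n)_r + I(Σ_{i=1}^n x_i − 1)_r. In particular, finite convergence of the Lasserre hierarchy for the Motzkin–Straus problem of G \ 1 implies finite convergence for that of G. -/
open Finset Matrix MvPolynomial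

/-- A polynomial is a sum of squares. -/
def IsSOS {n : ℕ} (p : MvPolynomial (Fin n) ℝ) : Prop :=
  ∃ (k : ℕ) (f : Fin k → MvPolynomial (Fin n) ℝ), p = ∑ j, (f j) ^ 2

/-!
If `a` and `b` are adjacent twins, the closed neighbourhoods of `a` and `b` coincide, so the rows
and columns `a` and `b` of `A_G + I` are equal. Hence substituting `x_b ↦ x_a + x_b` turns the
quadratic form of `G ∖ a` into that of `G`, and `Σ_{i ≠ a} x_i - 1` into `Σ_i x_i - 1`. This
substitution is a ring homomorphism of degree one, so it maps a certificate for `G ∖ a` termwise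
to a certificate for `G`: sums of squares stay sums of squares, degrees do not grow, and the
multiplier of `x_b` is used for both `x_a` and `x_b`.
-/

open Function

theorem IsSOS.map {n m : ℕ} {p : MvPolynomial (Fin n) ℝ} (hp : IsSOS p)
    (φ : MvPolynomial (Fin n) ℝ →+* MvPolynomial (Fin m) ℝ) : IsSOS (φ p) := by
  obtain ⟨k, f, rfl⟩ := hp
  exact ⟨k, fun j => φ (f j), by simp only [map_sum, map_pow]⟩

theorem Finset.sum_erase_update_add_mul {ι A : Type*} [Fintype ι] [DecidableEq ι]
    [NonUnitalNonAssocSemiring A] {a b : ι} (hab : a ≠ b) (x c : ι → A) (hc : c b = c a) :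
    ∑ i ∈ univ.erase a, update x b (x a + x b) i * c i = ∑ i, x i * c i := by
  have hb : b ∈ univ.erase a := mem_erase.mpr ⟨hab.symm, mem_univ b⟩
  have hrest : ∑ i ∈ (univ.erase a).erase b, update x b (x a + x b) i * c i =
      ∑ i ∈ (univ.erase a).erase b, x i * c i :=
    sum_congr rfl fun i hi => by rw [update_of_ne (ne_of_mem_erase hi)]
  rw [← add_sum_erase _ _ hb, hrest, update_self, ← add_sum_erase _ _ (mem_univ a),
    ← add_sum_erase _ _ hb, hc, add_mul, add_assoc]

namespace MvPolynomial

variable {σ τ R : Type*}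

theorem totalDegree_aeval_le_of_totalDegree_le_one [CommSemiring R] (g : σ → MvPolynomial τ R)
    (hg : ∀ i, (g i).totalDegree ≤ 1) (p : MvPolynomial σ R) :
    (aeval g p).totalDegree ≤ p.totalDegree := by
  conv_lhs => rw [p.as_sum]
  rw [map_sum]
  refine (totalDegree_finsetSum _ _).trans (Finset.sup_le fun m hm => ?_)
  rw [aeval_monomial, algebraMap_eq]
  refine (totalDegree_mul _ _).trans ?_
  rw [totalDegree_C, zero_add]
  refine (totalDegree_finsetProd _ _).trans
    ((Finset.sum_le_sum fun i _ => ?_).trans (le_totalDegree hm))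
  calc ((g i) ^ m i).totalDegree ≤ m i * (g i).totalDegree := totalDegree_pow _ _
    _ ≤ m i := by simpa using Nat.mul_le_mul_left (m i) (hg i)

theorem totalDegree_X_le [CommSemiring R] (s : σ) : (X s : MvPolynomial σ R).totalDegree ≤ 1 :=
  (totalDegree_monomial_le _ _).trans (by simp)

theorem totalDegree_X_mul_map_le [CommRing R] [IsDomain R]
    (φ : MvPolynomial σ R →+* MvPolynomial τ R)
    (hφ : ∀ p, (φ p).totalDegree ≤ p.totalDegree) (i : τ) (j : σ) (p : MvPolynomial σ R) :
    (X i * φ p).totalDegree ≤ (X j * p).totalDegree := by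
  rcases eq_or_ne p 0 with rfl | hp
  · simp
  rw [totalDegree_mul_of_isDomain (X_ne_zero j) hp, totalDegree_X]
  refine (totalDegree_mul _ _).trans ?_
  rw [totalDegree_X]
  have := hφ p
  omega

section TwinSubst

variable [DecidableEq σ]

noncomputable def twinSubst [CommSemiring R] (a b : σ) :
    MvPolynomial σ R →ₐ[R] MvPolynomial σ R :=
  aeval (update X b (X a + X b))

theorem twinSubst_X [CommSemiring R] (a b i : σ) :
    twinSubst (R := R) a b (X i) = update X b (X a + X b) i :=
  aeval_X _ _

theorem twinSubst_C [CommSemiring R] (a b : σ) (r : R) : twinSubst a b (C r) = C r :=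
  aeval_C _ _

theorem totalDegree_twinSubst_le [CommSemiring R] (a b : σ) (p : MvPolynomial σ R) :
    (twinSubst a b p).totalDegree ≤ p.totalDegree := by
  refine totalDegree_aeval_le_of_totalDegree_le_one _ (fun i => ?_) p
  rcases eq_or_ne i b with rfl | hi
  · rw [update_self]
    exact (totalDegree_add _ _).trans (max_le (totalDegree_X_le _) (totalDegree_X_le _))
  · rw [update_of_ne hi]
    exact totalDegree_X_le _

variable [Fintype σ] {a b : σ}

theorem twinSubst_sum_erase_X_sub_one [CommRing R] (hab : a ≠ b) :
    twinSubst a b ((∑ i ∈ univ.erase a, X i) - 1 : MvPolynomial σ R) = (∑ i, X i) - 1 := by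
  have h := sum_erase_update_add_mul hab X (fun _ => (1 : MvPolynomial σ R)) rfl
  simp only [mul_one] at h
  rw [map_sub, map_one, map_sum, ← h]
  simp only [twinSubst_X]

theorem twinSubst_sum_erase_X_mul [CommSemiring R] (hab : a ≠ b) (p : σ → MvPolynomial σ R) :
    twinSubst a b (∑ i ∈ univ.erase a, X i * p i) =
      ∑ i, X i * twinSubst a b (update p a (p b) i) := by
  have hc : twinSubst a b (update p a (p b) b) = twinSubst a b (update p a (p b) a) := by
    rw [update_of_ne hab.symm, update_self]
  rw [← sum_erase_update_add_mul hab X _ hc, map_sum]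
  refine sum_congr rfl fun i hi => ?_
  rw [map_mul, twinSubst_X, update_of_ne (ne_of_mem_erase hi)]

theorem twinSubst_quadForm [CommSemiring R] (hab : a ≠ b) (M : Matrix σ σ R)
    (hcol : ∀ i, M i b = M i a) (hrow : ∀ j, M b j = M a j) :
    twinSubst a b (∑ i ∈ univ.erase a, ∑ j ∈ univ.erase a, C (M i j) * X i * X j) =
      ∑ i, ∑ j, C (M i j) * X i * X j := by
  have inner : ∀ i, ∑ j ∈ univ.erase a,
      C (M i j) * update X b (X a + X b) i * update X b (X a + X b) j =
        update X b (X a + X b) i * ∑ j, X j * C (M i j) := by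
    intro i
    calc _ = ∑ j ∈ univ.erase a,
          update X b (X a + X b) j * (update X b (X a + X b) i * C (M i j)) :=
          sum_congr rfl fun j _ => by ring
      _ = ∑ j, X j * (update X b (X a + X b) i * C (M i j)) :=
          sum_erase_update_add_mul hab X _ (by rw [hcol])
      _ = _ := by rw [mul_sum]; exact sum_congr rfl fun j _ => by ring
  simp only [map_sum, map_mul, twinSubst_X, twinSubst_C, inner]
  rw [sum_erase_update_add_mul hab X _ (by simp only [hrow])]
  exact sum_congr rfl fun i _ => by rw [mul_sum]; exact sum_congr rfl fun j _ => by ring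

end TwinSubst

end MvPolynomial

namespace SimpleGraph

variable {V R : Type*} [DecidableEq V] [AddMonoidWithOne R] (G : SimpleGraph V)
  [DecidableRel G.Adj] {a b : V}

theorem adjMatrix_add_one_apply_right_of_twin (hadj : G.Adj a b)
    (htwin : G.neighborSet a \ {b} = G.neighborSet b \ {a}) (i : V) :
    (G.adjMatrix R + 1) i b = (G.adjMatrix R + 1) i a := by
  have hab := G.ne_of_adj hadj
  rcases eq_or_ne i a with rfl | hia
  · simp [one_apply, hadj, hab]
  rcases eq_or_ne i b with rfl | hib
  · simp [one_apply, hadj.symm, hab.symm]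
  have hiff : G.Adj i b ↔ G.Adj i a := by
    simpa [hia, hib, G.adj_comm, Iff.comm] using Set.ext_iff.mp htwin i
  simp [one_apply, hia, hib, hiff]

theorem adjMatrix_add_one_apply_left_of_twin (hadj : G.Adj a b)
    (htwin : G.neighborSet a \ {b} = G.neighborSet b \ {a}) (j : V) :
    (G.adjMatrix R + 1) b j = (G.adjMatrix R + 1) a j := by
  have hsymm := G.isSymm_adjMatrix.add (isSymm_one (α := R))
  exact (hsymm.apply j b).trans
    ((G.adjMatrix_add_one_apply_right_of_twin hadj htwin j).trans (hsymm.apply a j))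

end SimpleGraph

/-- Contracting a twin pair `(a,b)` (deleting vertex `a`) preserves degree-`r` Lasserre
certificates: if `xᵀ(A_{G∖a}+I)x - 1/α(G)` lies in `M(x_i : i ≠ a)_r + I(Σ_{i≠a} x_i - 1)_r`,
then `xᵀ(A_G+I)x - 1/α(G)` lies in `M(x_1,…,x_n)_r + I(Σ_i x_i - 1)_r`. -/
theorem twin_pair_lasserre_transfer {n : ℕ} (G : SimpleGraph (Fin n)) [DecidableRel G.Adj]
    (a b : Fin n) (hadj : G.Adj a b)
    (htwin : G.neighborSet a \ {b} = G.neighborSet b \ {a}) (r : ℕ)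
    (h : ∃ (σ₀ : MvPolynomial (Fin n) ℝ) (σ : Fin n → MvPolynomial (Fin n) ℝ)
        (q : MvPolynomial (Fin n) ℝ),
      IsSOS σ₀ ∧ σ₀.totalDegree ≤ r ∧
      (∀ i ∈ univ.erase a, IsSOS (σ i) ∧ (X i * σ i).totalDegree ≤ r) ∧
      (q * ((∑ i ∈ univ.erase a, X i) - 1)).totalDegree ≤ r ∧
      (∑ i ∈ univ.erase a, ∑ j ∈ univ.erase a,
          C ((G.adjMatrix ℝ + 1) i j) * X i * X j) - C (1 / (alpha G : ℝ)) =
        σ₀ + (∑ i ∈ univ.erase a, X i * σ i) +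
          q * ((∑ i ∈ univ.erase a, X i) - 1)) :
    ∃ (σ₀ : MvPolynomial (Fin n) ℝ) (σ : Fin n → MvPolynomial (Fin n) ℝ)
      (q : MvPolynomial (Fin n) ℝ),
      IsSOS σ₀ ∧ σ₀.totalDegree ≤ r ∧
      (∀ i, IsSOS (σ i) ∧ (X i * σ i).totalDegree ≤ r) ∧
      (q * ((∑ i, X i) - 1)).totalDegree ≤ r ∧
      (∑ i, ∑ j, C ((G.adjMatrix ℝ + 1) i j) * X i * X j) - C (1 / (alpha G : ℝ)) =
        σ₀ + (∑ i, X i * σ i) + q * ((∑ i, X i) - 1) := by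
  obtain ⟨σ₀, σ, q, hσ₀, hσ₀deg, hσ, hqdeg, heq⟩ := h
  have hab : a ≠ b := G.ne_of_adj hadj
  have hdeg := totalDegree_twinSubst_le (R := ℝ) a b
  refine ⟨twinSubst a b σ₀, fun i => twinSubst a b (update σ a (σ b) i),
    twinSubst a b q, hσ₀.map _, (hdeg σ₀).trans hσ₀deg, fun i => ?_, ?_, ?_⟩
  · obtain ⟨j, hj, hσj⟩ : ∃ j ∈ univ.erase a, update σ a (σ b) i = σ j := by
      rcases eq_or_ne i a with rfl | hi
      · exact ⟨b, mem_erase.mpr ⟨hab.symm, mem_univ b⟩, update_self ..⟩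
      · exact ⟨i, mem_erase.mpr ⟨hi, mem_univ i⟩, update_of_ne hi ..⟩
    dsimp only
    rw [hσj]
    exact ⟨(hσ j hj).1.map _,
      (totalDegree_X_mul_map_le (twinSubst a b).toRingHom hdeg i j _).trans (hσ j hj).2⟩
  · rw [← twinSubst_sum_erase_X_sub_one hab, ← map_mul]
    exact (hdeg _).trans hqdeg
  · have h := congrArg (twinSubst a b) heq
    simp only [map_add, map_mul, twinSubst_sum_erase_X_sub_one hab,
      twinSubst_sum_erase_X_mul hab] at h
    simpa only [map_sub, twinSubst_C, twinSubst_quadForm hab _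
      (G.adjMatrix_add_one_apply_right_of_twin hadj htwin)
      (G.adjMatrix_add_one_apply_left_of_twin hadj htwin)] using h
end

section
/- Let G be a graph on {1,...,n} without twin pairs, let B ∈ B(G), and suppose {l,m} is a critical edge of G with B_{lm} = 1. Then for no λ ∈ ℝ and no r does the polynomial x^T B x − 1/α(G) admit a representation σ + Σ_{i=1}^n x_i σ_i + q(Σ_{i=1}^n x_i − 1) with σ, σ_1,...,σ_n sums of squares and q ∈ ℝ[x]. Equivalently, the Lasserre hierarchy of min_{x∈Δ_n} x^T B x does not have finite convergence. -/
/-!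
Since `{l, m}` is critical, some `S ∋ l, m` with `|S| = α + 1` spans no edge of `G` but `lm`.
With `a = 1/α`, the points `z(t) = t eₗ + (a - t) eₘ + a 𝟙_{S \ {l, m}}` satisfy `∑ zᵢ = 1` and
`z(t)ᵀ B z(t) = a`, and for `0 < t < a` they lie in the simplex with support `S`. Evaluating a
certificate `xᵀBx - a = σ₀ + ∑ xᵢσᵢ + q (∑ xᵢ - 1)` there forces `σ₀` and the `σᵢ`, `i ∈ S`, to
vanish on the segment, hence on the whole line `z(ℝ)`. A sum of squares vanishes to second order
wherever it vanishes, so differentiating the certificate along the line gives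
`2 (B z(t))ₖ = σₖ(z(t)) + q(z(t))` for every `k`. For `k = l` this shows `q ≡ 2a` on the line; for a
vertex `k` adjacent to exactly one of `l`, `m` (there is one, as `l`, `m` are not twins) it makes
`σₖ(z(t))` a non-constant affine function of `t`, which takes negative values.
-/

open Finset Matrix MvPolynomial

section StabilityNumber

variable {V : Type*} [Fintype V] {G : SimpleGraph V}

lemma bddAbove_stableSet_card (G : SimpleGraph V) :
    BddAbove {k | ∃ S : Finset V, (∀ i ∈ S, ∀ j ∈ S, ¬ G.Adj i j) ∧ S.card = k} :=
  ⟨Fintype.card V, fun _ ⟨S, _, hS⟩ => hS ▸ S.card_le_univ⟩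

lemma card_le_alpha {S : Finset V} (hS : ∀ i ∈ S, ∀ j ∈ S, ¬ G.Adj i j) :
    S.card ≤ alpha G :=
  le_csSup (bddAbove_stableSet_card G) ⟨S, hS, rfl⟩

lemma exists_card_eq_alpha (G : SimpleGraph V) :
    ∃ S : Finset V, (∀ i ∈ S, ∀ j ∈ S, ¬ G.Adj i j) ∧ S.card = alpha G :=
  Nat.sSup_mem (s := {k | ∃ S : Finset V, (∀ i ∈ S, ∀ j ∈ S, ¬ G.Adj i j) ∧ S.card = k})
    ⟨0, ∅, by simp, rfl⟩ (bddAbove_stableSet_card G)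

lemma exists_finset_of_alpha_deleteEdges_eq_succ {l m : V}
    (hcrit : alpha (G.deleteEdges {s(l, m)}) = alpha G + 1) :
    ∃ S : Finset V, S.card = alpha G + 1 ∧ l ∈ S ∧ m ∈ S ∧
      ∀ i ∈ S, ∀ j ∈ S, G.Adj i j → s(i, j) = s(l, m) := by
  obtain ⟨S, hS, hcard⟩ := exists_card_eq_alpha (G.deleteEdges {s(l, m)})
  have hadj : ∀ i ∈ S, ∀ j ∈ S, G.Adj i j → s(i, j) = s(l, m) := fun i hi j hj h => by
    have := hS i hi j hj
    rw [SimpleGraph.deleteEdges_adj] at this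
    exact Set.mem_singleton_iff.mp (not_not.mp fun hne => this ⟨h, hne⟩)
  -- otherwise `S` would be a stable set of `G` of size `α(G) + 1`
  have hmem : ∀ v ∈ s(l, m), v ∈ S := by
    by_contra! ⟨v, hv, hvS⟩
    refine absurd (card_le_alpha (S := S) (G := G) fun i hi j hj h => hvS ?_) (by omega)
    rcases Sym2.mem_iff.mp (hadj i hi j hj h ▸ hv) with rfl | rfl <;> assumption
  exact ⟨S, hcrit ▸ hcard, hmem l (Sym2.mem_mk_left l m), hmem m (Sym2.mem_mk_right l m), hadj⟩

end StabilityNumber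

lemma exists_ne_of_neighborSet_sdiff_ne {V : Type*} {G : SimpleGraph V} {B : Matrix V V ℝ}
    (hedge : ∀ i j, G.Adj i j → 1 ≤ B i j) (hnonedge : ∀ i j, i ≠ j → ¬ G.Adj i j → B i j = 0)
    {l m : V} (h : G.neighborSet l \ {m} ≠ G.neighborSet m \ {l}) :
    ∃ i, B i l ≠ B i m := by
  have hsep : ∀ {l m i}, G.Adj i l → i ≠ m → ¬ G.Adj i m → B i l ≠ B i m :=
    fun hl hm hnm => by linarith [hedge _ _ hl, hnonedge _ _ hm hnm]
  obtain ⟨i, hi⟩ : ∃ i, ¬ (i ∈ G.neighborSet l \ {m} ↔ i ∈ G.neighborSet m \ {l}) := by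
    by_contra! h'
    exact h (Set.ext h')
  simp only [Set.mem_sdiff, SimpleGraph.mem_neighborSet, Set.mem_singleton_iff] at hi
  refine ⟨i, ?_⟩
  by_cases hl : G.Adj l i ∧ i ≠ m
  · have hm : ¬ G.Adj i m := fun h => hi (iff_of_true hl ⟨h.symm, (G.ne_of_adj hl.1).symm⟩)
    exact hsep hl.1.symm hl.2 hm
  · have hm : G.Adj m i ∧ i ≠ l := by tauto
    have hl' : ¬ G.Adj i l := fun h => hl ⟨h.symm, (G.ne_of_adj hm.1).symm⟩
    exact (hsep hm.1.symm hm.2 hl').symm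

lemma eq_zero_of_forall_nonneg_add_mul {c d : ℝ} (h : ∀ t, 0 ≤ c + t * d) : d = 0 := by
  by_contra hd
  have := h ((-c - 1) / d)
  rw [div_mul_cancel₀ _ hd] at this
  linarith

namespace IsSOS

variable {n : ℕ} {p : MvPolynomial (Fin n) ℝ}

lemma eval_nonneg (hp : IsSOS p) (x : Fin n → ℝ) : 0 ≤ eval x p := by
  obtain ⟨k, f, rfl⟩ := hp
  simp only [map_sum, map_pow]
  positivity

lemma eval_pderiv_eq_zero (hp : IsSOS p) {x : Fin n → ℝ} (hx : eval x p = 0) (k : Fin n) :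
    eval x (pderiv k p) = 0 := by
  obtain ⟨K, f, rfl⟩ := hp
  simp only [map_sum, map_pow] at hx
  have hf : ∀ j, eval x (f j) = 0 := fun j =>
    pow_eq_zero_iff two_ne_zero |>.mp <|
      (sum_eq_zero_iff_of_nonneg fun i _ => sq_nonneg _).mp hx j (mem_univ j)
  simp [hf]

end IsSOS

lemma exists_polynomial_eval_line {σ : Type*} (p : MvPolynomial σ ℝ) (u v : σ → ℝ) :
    ∃ P : Polynomial ℝ, ∀ t, P.eval t = eval (u + t • v) p := by
  refine ⟨aeval (fun i => Polynomial.C (u i) + Polynomial.C (v i) * Polynomial.X) p, fun t => ?_⟩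
  induction p using MvPolynomial.induction_on with
  | C a => simp
  | add p q hp hq => simp [hp, hq]
  | mul_X p i hp => simp [hp, mul_comm t]

lemma eval_line_eq_zero_of_infinite {σ : Type*} {p : MvPolynomial σ ℝ} {u v : σ → ℝ}
    {s : Set ℝ} (hs : s.Infinite) (h : ∀ t ∈ s, eval (u + t • v) p = 0) (t : ℝ) :
    eval (u + t • v) p = 0 := by
  obtain ⟨P, hP⟩ := exists_polynomial_eval_line p u v
  have : P = 0 := P.eq_zero_of_infinite_isRoot (hs.mono fun t ht => (hP t).trans (h t ht))
  rw [← hP, this, Polynomial.eval_zero]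

lemma eval_quadForm {n : ℕ} {B : Matrix (Fin n) (Fin n) ℝ} (x : Fin n → ℝ) :
    eval x (∑ i, ∑ j, C (B i j) * X i * X j) = x ⬝ᵥ (B *ᵥ x) := by
  simp only [map_sum, map_mul, eval_C, eval_X, dotProduct, mulVec, mul_sum]
  exact sum_congr rfl fun i _ => sum_congr rfl fun j _ => by ring

lemma eval_pderiv_quadForm {n : ℕ} {B : Matrix (Fin n) (Fin n) ℝ} (hB : B.IsSymm)
    (x : Fin n → ℝ) (k : Fin n) :
    eval x (pderiv k (∑ i, ∑ j, C (B i j) * X i * X j)) = 2 * (B *ᵥ x) k := by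
  simp [Pi.single_apply, sum_add_distrib, mulVec, dotProduct, hB.apply k, mul_comm, two_mul]

section SimplexCertificate

noncomputable def simplexCertificate {n : ℕ} (σ₀ : MvPolynomial (Fin n) ℝ)
    (σ : Fin n → MvPolynomial (Fin n) ℝ) (q : MvPolynomial (Fin n) ℝ) : MvPolynomial (Fin n) ℝ :=
  σ₀ + (∑ i, X i * σ i) + q * ((∑ i, X i) - 1)

variable {n : ℕ} {σ₀ q : MvPolynomial (Fin n) ℝ} {σ : Fin n → MvPolynomial (Fin n) ℝ}
  {x : Fin n → ℝ}

lemma eval_simplexCertificate (hx : ∑ i, x i = 1) :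
    eval x (simplexCertificate σ₀ σ q) = eval x σ₀ + ∑ i, x i * eval x (σ i) := by
  simp [simplexCertificate, hx]

lemma eval_multipliers_eq_zero_of_eval_simplexCertificate_eq_zero (hσ₀ : IsSOS σ₀)
    (hσ : ∀ i, IsSOS (σ i)) (hx : ∀ i, 0 ≤ x i) (hsum : ∑ i, x i = 1)
    (h : eval x (simplexCertificate σ₀ σ q) = 0) :
    eval x σ₀ = 0 ∧ ∀ i, x i * eval x (σ i) = 0 := by
  have hterm : ∀ i ∈ univ, 0 ≤ x i * eval x (σ i) :=
    fun i _ => mul_nonneg (hx i) ((hσ i).eval_nonneg x)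
  rw [eval_simplexCertificate hsum, add_eq_zero_iff_of_nonneg (hσ₀.eval_nonneg x)
    (sum_nonneg hterm), sum_eq_zero_iff_of_nonneg hterm] at h
  exact ⟨h.1, fun i => h.2 i (mem_univ i)⟩

lemma eval_pderiv_simplexCertificate (hσ₀ : IsSOS σ₀) (hσ : ∀ i, IsSOS (σ i))
    (hsum : ∑ i, x i = 1) (h₀ : eval x σ₀ = 0) (hcompl : ∀ i, x i * eval x (σ i) = 0)
    (k : Fin n) :
    eval x (pderiv k (simplexCertificate σ₀ σ q)) = eval x (σ k) + eval x q := by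
  have hσk : ∀ i, x i * eval x (pderiv k (σ i)) = 0 := fun i => by
    rcases mul_eq_zero.mp (hcompl i) with h | h
    · rw [h, zero_mul]
    · rw [(hσ i).eval_pderiv_eq_zero h, mul_zero]
  simp [simplexCertificate, hσ₀.eval_pderiv_eq_zero h₀, hsum, hσk, Pi.single_apply, apply_ite]

end SimplexCertificate

section CriticalCurve

variable {n : ℕ} {S : Finset (Fin n)} {l m : Fin n} {a t : ℝ}

-- `t eₗ + (a - t) eₘ + a 𝟙_{S \ {l, m}}` when `l, m ∈ S`, written as a line in `t`
def criticalCurve (S : Finset (Fin n)) (l m : Fin n) (a t : ℝ) : Fin n → ℝ :=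
  (fun i => if i ∈ S.erase l then a else 0) + t • (Pi.single l 1 - Pi.single m 1)

lemma criticalCurve_apply_left (hlm : l ≠ m) : criticalCurve S l m a t l = t := by
  simp [criticalCurve, hlm]

lemma criticalCurve_apply_right (hm : m ∈ S) (hlm : l ≠ m) :
    criticalCurve S l m a t m = a - t := by
  simp [criticalCurve, hm, hlm.symm, sub_eq_add_neg]

lemma criticalCurve_apply_of_mem {i : Fin n} (hi : i ∈ S) (hil : i ≠ l) (him : i ≠ m) :
    criticalCurve S l m a t i = a := by
  simp [criticalCurve, hi, hil, him]

lemma criticalCurve_apply_of_notMem (hl : l ∈ S) (hm : m ∈ S) {i : Fin n} (hi : i ∉ S) :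
    criticalCurve S l m a t i = 0 := by
  simp [criticalCurve, hi, (ne_of_mem_of_not_mem hl hi).symm, (ne_of_mem_of_not_mem hm hi).symm]

lemma sum_criticalCurve : ∑ i, criticalCurve S l m a t i = (S.erase l).card * a := by
  simp only [criticalCurve, Pi.add_apply, Pi.smul_apply, smul_eq_mul, sum_add_distrib, ← mul_sum,
    sum_ite_mem, univ_inter, sum_const, nsmul_eq_mul]
  simp

lemma criticalCurve_pos (hm : m ∈ S) (hlm : l ≠ m) (ht : t ∈ Set.Ioo 0 a) {i : Fin n}
    (hi : i ∈ S) : 0 < criticalCurve S l m a t i := by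
  by_cases hil : i = l
  · rw [hil, criticalCurve_apply_left hlm]; exact ht.1
  by_cases him : i = m
  · rw [him, criticalCurve_apply_right hm hlm]; linarith [ht.2]
  · rw [criticalCurve_apply_of_mem hi hil him]; linarith [ht.1, ht.2]

lemma criticalCurve_nonneg (hl : l ∈ S) (hm : m ∈ S) (hlm : l ≠ m) (ht : t ∈ Set.Ioo 0 a)
    (i : Fin n) : 0 ≤ criticalCurve S l m a t i :=
  if hi : i ∈ S then (criticalCurve_pos hm hlm ht hi).le
  else (criticalCurve_apply_of_notMem hl hm hi).ge

lemma mulVec_criticalCurve (B : Matrix (Fin n) (Fin n) ℝ) (k : Fin n) :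
    (B *ᵥ criticalCurve S l m a t) k = (B *ᵥ criticalCurve S l m a 0) k + t * (B k l - B k m) := by
  simp [criticalCurve, mulVec_add, mulVec_smul, mulVec_sub]

lemma mulVec_criticalCurve_of_mem {B : Matrix (Fin n) (Fin n) ℝ} (hB : B.IsSymm)
    (hdiag : ∀ i, B i i = 1) (hBlm : B l m = 1)
    (hBS : ∀ i ∈ S, ∀ j ∈ S, i ≠ j → s(i, j) ≠ s(l, m) → B i j = 0)
    (hl : l ∈ S) (hm : m ∈ S) (hlm : l ≠ m) {k : Fin n} (hk : k ∈ S) :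
    (B *ᵥ criticalCurve S l m a t) k = a := by
  have hrow : ∀ j, j ≠ k → s(k, j) ≠ s(l, m) → B k j * criticalCurve S l m a t j = 0 := by
    intro j hjk hkj
    by_cases hj : j ∈ S
    · rw [hBS k hk j hj (Ne.symm hjk) hkj, zero_mul]
    · rw [criticalCurve_apply_of_notMem hl hm hj, mul_zero]
  simp only [mulVec, dotProduct]
  by_cases hkl : k = l
  · subst hkl
    rw [Fintype.sum_eq_add k m hlm fun j hj => hrow j hj.1 (by simp [hj.1, hj.2]),
      criticalCurve_apply_left hlm, criticalCurve_apply_right hm hlm, hdiag, hBlm]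
    ring
  by_cases hkm : k = m
  · subst hkm
    rw [Fintype.sum_eq_add l k hlm fun j hj => hrow j hj.2 (by simp [hj.1, hj.2]),
      criticalCurve_apply_left hlm, criticalCurve_apply_right hm hlm, hdiag, hB.apply, hBlm]
    ring
  · rw [Fintype.sum_eq_single k fun j hj => hrow j hj (by simp [hkl, hkm]),
      criticalCurve_apply_of_mem hk hkl hkm, hdiag, one_mul]

lemma dotProduct_mulVec_criticalCurve {B : Matrix (Fin n) (Fin n) ℝ} (hB : B.IsSymm)
    (hdiag : ∀ i, B i i = 1) (hBlm : B l m = 1)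
    (hBS : ∀ i ∈ S, ∀ j ∈ S, i ≠ j → s(i, j) ≠ s(l, m) → B i j = 0)
    (hl : l ∈ S) (hm : m ∈ S) (hlm : l ≠ m) :
    criticalCurve S l m a t ⬝ᵥ (B *ᵥ criticalCurve S l m a t) = (S.erase l).card * a * a := by
  rw [← sum_criticalCurve, sum_mul]
  refine sum_congr rfl fun i _ => ?_
  by_cases hi : i ∈ S
  · rw [mulVec_criticalCurve_of_mem hB hdiag hBlm hBS hl hm hlm hi]
  · simp [criticalCurve_apply_of_notMem hl hm hi]

variable {σ₀ q : MvPolynomial (Fin n) ℝ} {σ : Fin n → MvPolynomial (Fin n) ℝ}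

lemma eval_multipliers_criticalCurve_eq_zero (hσ₀ : IsSOS σ₀) (hσ : ∀ i, IsSOS (σ i))
    (hl : l ∈ S) (hm : m ∈ S) (hlm : l ≠ m) (ha : 0 < a)
    (hsum : ∀ t, ∑ i, criticalCurve S l m a t i = 1)
    (hzero : ∀ t, eval (criticalCurve S l m a t) (simplexCertificate σ₀ σ q) = 0) (t : ℝ) :
    eval (criticalCurve S l m a t) σ₀ = 0 ∧ ∀ i ∈ S, eval (criticalCurve S l m a t) (σ i) = 0 := by
  have hseg : ∀ s ∈ Set.Ioo 0 a, eval (criticalCurve S l m a s) σ₀ = 0 ∧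
      ∀ i ∈ S, eval (criticalCurve S l m a s) (σ i) = 0 := fun s hs => by
    obtain ⟨h₀, hcompl⟩ := eval_multipliers_eq_zero_of_eval_simplexCertificate_eq_zero hσ₀ hσ
      (criticalCurve_nonneg hl hm hlm hs) (hsum s) (hzero s)
    exact ⟨h₀, fun i hi => (mul_eq_zero.mp (hcompl i)).resolve_left
      (criticalCurve_pos hm hlm hs hi).ne'⟩
  exact ⟨eval_line_eq_zero_of_infinite (Set.Ioo_infinite ha) (fun s hs => (hseg s hs).1) t,
    fun i hi => eval_line_eq_zero_of_infinite (Set.Ioo_infinite ha)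
      (fun s hs => (hseg s hs).2 i hi) t⟩

lemma eval_pderiv_simplexCertificate_criticalCurve (hσ₀ : IsSOS σ₀) (hσ : ∀ i, IsSOS (σ i))
    (hl : l ∈ S) (hm : m ∈ S) (hlm : l ≠ m) (ha : 0 < a)
    (hsum : ∀ t, ∑ i, criticalCurve S l m a t i = 1)
    (hzero : ∀ t, eval (criticalCurve S l m a t) (simplexCertificate σ₀ σ q) = 0)
    (k : Fin n) (t : ℝ) :
    eval (criticalCurve S l m a t) (pderiv k (simplexCertificate σ₀ σ q)) =
      eval (criticalCurve S l m a t) (σ k) + eval (criticalCurve S l m a t) q := by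
  obtain ⟨h₀, hS⟩ := eval_multipliers_criticalCurve_eq_zero hσ₀ hσ hl hm hlm ha hsum hzero t
  refine eval_pderiv_simplexCertificate hσ₀ hσ (hsum t) h₀ (fun i => ?_) k
  by_cases hi : i ∈ S
  · rw [hS i hi, mul_zero]
  · rw [criticalCurve_apply_of_notMem hl hm hi, zero_mul]

end CriticalCurve

/-- If `G` has no twin pairs, `B ∈ B(G)`, and `{l,m}` is a critical edge with `B_{lm} = 1`,
then `xᵀBx - 1/α(G)` has no representation in the quadratic module generated by `x₁,…,xₙ`
plus the ideal generated by `Σ xᵢ - 1`: the Lasserre hierarchy does not converge finitely. -/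
theorem no_finite_convergence {n : ℕ} (G : SimpleGraph (Fin n))
    (htwinfree : ∀ i j, G.Adj i j → G.neighborSet i \ {j} ≠ G.neighborSet j \ {i})
    (B : Matrix (Fin n) (Fin n) ℝ) (hsymm : B.IsSymm)
    (hdiag : ∀ i, B i i = 1)
    (hedge : ∀ i j, G.Adj i j → 1 ≤ B i j)
    (hnonedge : ∀ i j, i ≠ j → ¬ G.Adj i j → B i j = 0)
    (l m : Fin n) (hlm : G.Adj l m)
    (hcrit : alpha (G.deleteEdges {s(l, m)}) = alpha G + 1)
    (hBlm : B l m = 1) :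
    ¬ ∃ (σ₀ : MvPolynomial (Fin n) ℝ) (σ : Fin n → MvPolynomial (Fin n) ℝ)
        (q : MvPolynomial (Fin n) ℝ),
      IsSOS σ₀ ∧ (∀ i, IsSOS (σ i)) ∧
      (∑ i, ∑ j, C (B i j) * X i * X j) - C (1 / (alpha G : ℝ)) =
        σ₀ + (∑ i, X i * σ i) + q * ((∑ i, X i) - 1) := by
  rintro ⟨σ₀, σ, q, hσ₀, hσ, hid⟩
  change _ = simplexCertificate σ₀ σ q at hid
  obtain ⟨S, hScard, hl, hm, hSadj⟩ := exists_finset_of_alpha_deleteEdges_eq_succ hcrit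
  have hlm' : l ≠ m := G.ne_of_adj hlm
  have hBS : ∀ i ∈ S, ∀ j ∈ S, i ≠ j → s(i, j) ≠ s(l, m) → B i j = 0 :=
    fun i hi j hj hij he => hnonedge i j hij fun h => he (hSadj i hi j hj h)
  have hα : 0 < alpha G := by have := one_lt_card.mpr ⟨l, hl, m, hm, hlm'⟩; omega
  have hcard : ((S.erase l).card : ℝ) * (1 / alpha G) = 1 := by
    rw [card_erase_of_mem hl, hScard]; field_simp; simp
  generalize 1 / (alpha G : ℝ) = a at hid hcard
  have ha : 0 < a := pos_of_mul_pos_right (hcard ▸ one_pos) (Nat.cast_nonneg _)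
  set z := criticalCurve S l m a with hz
  have hsum : ∀ t, ∑ i, z t i = 1 := fun t => by rw [hz, sum_criticalCurve, hcard]
  have hzero : ∀ t, eval (z t) (simplexCertificate σ₀ σ q) = 0 := fun t => by
    rw [← hid, map_sub, eval_quadForm, eval_C, hz,
      dotProduct_mulVec_criticalCurve hsymm hdiag hBlm hBS hl hm hlm', hcard, one_mul, sub_self]
  have hgrad : ∀ k t, 2 * (B *ᵥ z t) k = eval (z t) (σ k) + eval (z t) q := fun k t => by
    rw [← eval_pderiv_quadForm hsymm,
      ← eval_pderiv_simplexCertificate_criticalCurve hσ₀ hσ hl hm hlm' ha hsum hzero,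
      ← hid, map_sub, pderiv_C, sub_zero]
  have hq : ∀ t, eval (z t) q = 2 * a := fun t => by
    have := hgrad l t
    rw [mulVec_criticalCurve_of_mem hsymm hdiag hBlm hBS hl hm hlm' hl,
      (eval_multipliers_criticalCurve_eq_zero hσ₀ hσ hl hm hlm' ha hsum hzero t).2 l hl] at this
    linarith
  obtain ⟨i₀, hi₀⟩ := exists_ne_of_neighborSet_sdiff_ne hedge hnonedge (htwinfree l m hlm)
  have hslope : 2 * (B i₀ l - B i₀ m) = 0 :=
    eq_zero_of_forall_nonneg_add_mul (c := 2 * (B *ᵥ z 0) i₀ - 2 * a) fun t => by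
      have hline := mulVec_criticalCurve (S := S) (l := l) (m := m) (a := a) (t := t) B i₀
      linarith [hgrad i₀ t, hq t, (hσ i₀).eval_nonneg (z t)]
  exact hi₀ (by linarith)
end
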